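/- Unisolvency of the simplified 2D stress element: if τ = η + a₁ curl p₁ + a₂ curl p₂ + a₃ curl p₃ + a₄ curl p₄, with η a matrix field with rows in P_{1,0}×P_{0,1}, p₁ = −x(1−x)(1−y)e₁, p₂ = −y(1−y)(1−x)e₂, p₃ = x(1−x)y e₁, p₄ = xy(1−y)e₂ (curl taken row-wise), and all edge moments ∫_e τn·n ds and ∫_e (τn·t)p ds (p ∈ P₁(e)) on the unit square vanish, then τ = 0. -/

import Mathlib

/-!
On each edge, the normal-normal component of `τ` is constant and the normal-tangential
component has the form `c + d (1 - 2t)`, where `c` and `d` are linear in the coefficients.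
Since `1 - 2t` is orthogonal to constants on `[0, 1]` and not to `t`, the two tangential
moments of an edge force `c = d = 0`; the twelve resulting equations form a triangular
system in the twelve coefficients.
-/

/-- A general element of the simplified 2D stress space
`Σ_K = (P_{1,0} × P_{0,1} rows) ⊕ span{curl p₁, curl p₂, curl p₃, curl p₄}`,
where `p₁ = −x(1−x)(1−y)e₁`, `p₂ = −y(1−y)(1−x)e₂`, `p₃ = x(1−x)y e₁`,
`p₄ = xy(1−y)e₂` and curl is taken row-wise:
`curl p₁ = [[x(1−x), (1−2x)(1−y)],[0,0]]`, `curl p₂ = [[0,0],[(−1+2y)(1−x), −y(1−y)]]`,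
`curl p₃ = [[x(1−x), −(1−2x)y],[0,0]]`, `curl p₄ = [[0,0],[x(1−2y), −y(1−y)]]`.
Coefficients: `e11a e11b e12a e12b e21a e21b e22a e22b` for `η` and `a1 a2 a3 a4`. -/
def tau (e11a e11b e12a e12b e21a e21b e22a e22b a1 a2 a3 a4 : ℝ) (x y : ℝ) :
    Matrix (Fin 2) (Fin 2) ℝ :=
  !![e11a + e11b * x + a1 * (x * (1 - x)) + a3 * (x * (1 - x)),
     e12a + e12b * y + a1 * ((1 - 2 * x) * (1 - y)) - a3 * ((1 - 2 * x) * y);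
     e21a + e21b * x + a2 * ((-1 + 2 * y) * (1 - x)) + a4 * (x * (1 - 2 * y)),
     e22a + e22b * y - a2 * (y * (1 - y)) - a4 * (y * (1 - y))]

lemma integral_unitInterval_quadratic (c₀ c₁ c₂ : ℝ) :
    ∫ t in (0:ℝ)..1, (c₀ + c₁ * t + c₂ * t ^ 2) = c₀ + c₁ / 2 + c₂ / 3 := by
  have hint : ∀ f : ℝ → ℝ, Continuous f → IntervalIntegrable f MeasureTheory.volume 0 1 :=
    fun f hf => hf.intervalIntegrable 0 1
  rw [intervalIntegral.integral_add (hint _ (by fun_prop)) (hint _ (by fun_prop)),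
    intervalIntegral.integral_add (hint _ (by fun_prop)) (hint _ (by fun_prop)),
    intervalIntegral.integral_const, intervalIntegral.integral_const_mul,
    intervalIntegral.integral_const_mul, integral_id, integral_pow]
  norm_num
  ring

lemma eq_zero_of_const_moment_eq_zero {f : ℝ → ℝ} {c : ℝ} (hf : ∀ t, f t = c)
    (h : ∫ t in (0:ℝ)..1, f t = 0) : c = 0 := by
  simpa [funext hf] using h

lemma eq_zero_of_linear_moments_eq_zero {f : ℝ → ℝ} {c d : ℝ}
    (hf : ∀ t, f t = c + d * (1 - 2 * t))
    (h : ∀ a b : ℝ, ∫ t in (0:ℝ)..1, (a + b * t) * f t = 0) : c = 0 ∧ d = 0 := by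
  have moment : ∀ a b : ℝ, a * c + b * (c / 2 - d / 6) = 0 := by
    intro a b
    have hq : ∫ t in (0:ℝ)..1, (a + b * t) * f t
        = ∫ t in (0:ℝ)..1, (a * (c + d) + (b * (c + d) - 2 * a * d) * t + (-2 * b * d) * t ^ 2) :=
      intervalIntegral.integral_congr fun t _ => by simp only [hf]; ring
    have := h a b
    rw [hq, integral_unitInterval_quadratic] at this
    linarith
  have h₁ := moment 1 0
  have h₂ := moment 0 1
  constructor <;> linarith

/-- Bottom edge `y=0`: `n=(0,−1)`, `t=(1,0)`, `τn = (−τ₁₂,−τ₂₂)`; right `x=1`: `n=(1,0)`,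
`t=(0,1)`; top `y=1`: `n=(0,1)`, `t=(1,0)`; left `x=0`: `n=(−1,0)`, `t=(0,1)`. -/
theorem stmt_9 (e11a e11b e12a e12b e21a e21b e22a e22b a1 a2 a3 a4 : ℝ)
    (τ : ℝ → ℝ → Matrix (Fin 2) (Fin 2) ℝ)
    (hτ : τ = tau e11a e11b e12a e12b e21a e21b e22a e22b a1 a2 a3 a4)
    -- normal-normal moments
    (hnb : (∫ t in (0:ℝ)..1, τ t 0 1 1) = 0)
    (hnr : (∫ t in (0:ℝ)..1, τ 1 t 0 0) = 0)
    (hnt : (∫ t in (0:ℝ)..1, τ t 1 1 1) = 0)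
    (hnl : (∫ t in (0:ℝ)..1, τ 0 t 0 0) = 0)
    -- normal-tangential moments against P₁(e)
    (htb : ∀ a b : ℝ, (∫ t in (0:ℝ)..1, (a + b * t) * (-(τ t 0 0 1))) = 0)
    (htr : ∀ a b : ℝ, (∫ t in (0:ℝ)..1, (a + b * t) * (τ 1 t 1 0)) = 0)
    (htt : ∀ a b : ℝ, (∫ t in (0:ℝ)..1, (a + b * t) * (τ t 1 0 1)) = 0)
    (htl : ∀ a b : ℝ, (∫ t in (0:ℝ)..1, (a + b * t) * (-(τ 0 t 1 0))) = 0) :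
    ∀ x y : ℝ, τ x y = 0 := by
  subst hτ
  obtain ⟨hb₀, hb₁⟩ := eq_zero_of_linear_moments_eq_zero (c := -e12a) (d := -a1)
    (fun t => by simp [tau]; ring) htb
  obtain ⟨hr₀, hr₁⟩ := eq_zero_of_linear_moments_eq_zero (c := e21a + e21b) (d := a4)
    (fun t => by simp [tau]) htr
  obtain ⟨ht₀, ht₁⟩ := eq_zero_of_linear_moments_eq_zero (c := e12a + e12b) (d := -a3)
    (fun t => by simp [tau]; ring) htt
  obtain ⟨hl₀, hl₁⟩ := eq_zero_of_linear_moments_eq_zero (c := -e21a) (d := a2)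
    (fun t => by simp [tau]; ring) htl
  have hb := eq_zero_of_const_moment_eq_zero (c := e22a) (fun t => by simp [tau]) hnb
  have hr := eq_zero_of_const_moment_eq_zero (c := e11a + e11b) (fun t => by simp [tau]) hnr
  have ht := eq_zero_of_const_moment_eq_zero (c := e22a + e22b) (fun t => by simp [tau]) hnt
  have hl := eq_zero_of_const_moment_eq_zero (c := e11a) (fun t => by simp [tau]) hnl
  obtain ⟨rfl, rfl, rfl, rfl, rfl, rfl, rfl, rfl, rfl, rfl, rfl, rfl⟩ :
      e11a = 0 ∧ e11b = 0 ∧ e12a = 0 ∧ e12b = 0 ∧ e21a = 0 ∧ e21b = 0 ∧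
        e22a = 0 ∧ e22b = 0 ∧ a1 = 0 ∧ a2 = 0 ∧ a3 = 0 ∧ a4 = 0 := by
    refine ⟨?_, ?_, ?_, ?_, ?_, ?_, ?_, ?_, ?_, ?_, ?_, ?_⟩ <;> linarith
  intro x y
  ext i j
  fin_cases i <;> fin_cases j <;> simp [tau]
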